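/- arXiv:1507.06808 — 4 statements merged into one kernel-verified Lean document; each statement's English description precedes it below -/
import Mathlib

section
/- Let N = ⊕_{l=1}^k M_{n_l}(ℂ), let α : N → B(H) and β : N^op → B(K) be unital *-homomorphisms, let e^{(l)} denote the minimal central projections of N, and set q = Σ_l (1/n_l) Σ_{i,j} β(e^{(l)}_{ji}) ⊗ α(e^{(l)}_{ij}). Then the compressed set q (β(N^op) ⊗ α(N)) q equals the linear span of the elements (β(e^{(l)}) ⊗ α(e^{(l)})) q, l = 1,…,k. In particular, every element of q (β(N^op) ⊗ α(N)) q is of the form Σ_l λ_l (β(e^{(l)}) ⊗ α(e^{(l)})) q with scalars λ_l ∈ ℂ. -/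
open Matrix MulOpposite

/-!
Put `Q_l = ∑ i j, β(e^{(l)}_{ji}) α(e^{(l)}_{ij})`, so `q = ∑ l, n_l⁻¹ Q_l`. Since `β` and `α`
commute and `β` reverses products, `β(op u) α(v) · β(op u') α(v') = β(op (u' u)) α(v v')`, and
matrix-unit calculus gives `Q_p (β(op x) α(y)) Q_r = δ_{pr} tr(x_p y_p) Q_p` and
`β(e^{(p)}) α(e^{(p)}) q = n_p⁻¹ Q_p`. Hence
`q (β(op x) α(y)) q = ∑ p, n_p⁻¹ tr(x_p y_p) β(e^{(p)}) α(e^{(p)}) q`, and taking `x_p = c_p • 1`,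
`y = 1` produces every linear combination with coefficients `c_p`.
-/

namespace Pi

variable {ι : Type*} [DecidableEq ι] {R : ι → Type*} [∀ i, MulZeroClass (R i)]

theorem single_mul_mul_single_self (i : ι) (a b : R i) (x : ∀ i, R i) :
    Pi.single i a * x * Pi.single i b = Pi.single i (a * x i * b) := by
  rw [← single_mul_left, ← single_mul]

theorem single_mul_mul_single_of_ne {i j : ι} (h : i ≠ j) (a : R i) (b : R j) (x : ∀ i, R i) :
    Pi.single i a * x * Pi.single j b = 0 := by
  rw [← single_mul_left, ← single_mul_right, single_eq_of_ne h.symm, zero_mul, single_zero]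

theorem single_mul_single_of_ne {i j : ι} (h : i ≠ j) (a : R i) (b : R j) :
    Pi.single i a * Pi.single j b = 0 := by
  ext k
  by_cases hk : k = i
  · subst hk; simp [h]
  · simp [hk]

end Pi

section CommutingMaps

variable {A B C F G : Type*} [Semigroup A] [Mul B] [Mul C]
  [FunLike F B A] [MulHomClass F B A] [FunLike G C A] [MulHomClass G C A]
  {β : F} {α : G}

theorem mul_mul_mul_of_commute (hcomm : ∀ u v, Commute (β u) (α v)) (u u' : B) (v v' : C) :
    β u * α v * (β u' * α v') = β (u * u') * α (v * v') := by
  rw [map_mul, map_mul, mul_assoc, ← mul_assoc (α v), ← (hcomm u' v).eq, mul_assoc, ← mul_assoc]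

end CommutingMaps

theorem op_mul_mul_mul_of_commute {A B F G : Type*} [Semigroup A] [Semigroup B]
    [FunLike F Bᵐᵒᵖ A] [MulHomClass F Bᵐᵒᵖ A] [FunLike G B A] [MulHomClass G B A]
    {β : F} {α : G} (hcomm : ∀ u v, Commute (β u) (α v)) (u v x y u' v' : B) :
    β (op u) * α v * (β (op x) * α y) * (β (op u') * α v') =
      β (op (u' * x * u)) * α (v * y * v') := by
  rw [mul_mul_mul_of_commute hcomm, mul_mul_mul_of_commute hcomm, op_mul, op_mul, mul_assoc,
    mul_assoc]

section Blocks

variable {ι : Type*} [DecidableEq ι] {m : ι → Type*} [∀ l, Fintype (m l)]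
  [∀ l, DecidableEq (m l)] {R A F G : Type*} [CommSemiring R] [Semiring A] [Algebra R A]
  [FunLike F (∀ l, Matrix (m l) (m l) R)ᵐᵒᵖ A] [AlgHomClass F R (∀ l, Matrix (m l) (m l) R)ᵐᵒᵖ A]
  [FunLike G (∀ l, Matrix (m l) (m l) R) A] [AlgHomClass G R (∀ l, Matrix (m l) (m l) R) A]
  (β : F) (α : G)

def flipTerm (p : ι) (i j : m p) : A :=
  β (op (Pi.single p (single j i (1 : R)))) * α (Pi.single p (single i j 1))

def flipSum (p : ι) : A :=
  ∑ i : m p, ∑ j : m p, flipTerm β α p i j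

def blockUnit (p : ι) : A :=
  β (op (Pi.single p (1 : Matrix (m p) (m p) R))) * α (Pi.single p 1)

variable {β α}

theorem flipTerm_mul_mul_flipTerm (hcomm : ∀ u v, Commute (β u) (α v))
    (x y : ∀ l, Matrix (m l) (m l) R) (p : ι) (i j i' j' : m p) :
    flipTerm β α p i j * (β (op x) * α y) * flipTerm β α p i' j' =
      (x p i' j * y p j i') • flipTerm β α p i j' := by
  rw [flipTerm, flipTerm, flipTerm, op_mul_mul_mul_of_commute hcomm,
    Pi.single_mul_mul_single_self, Pi.single_mul_mul_single_self, single_mul_mul_single,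
    single_mul_mul_single, one_mul, mul_one, one_mul, mul_one, ← smul_mul_smul_comm, ← map_smul,
    ← map_smul, ← op_smul, ← Pi.single_smul, ← Pi.single_smul, smul_single, smul_single,
    smul_eq_mul, smul_eq_mul, mul_one, mul_one]

theorem flipSum_mul_mul_flipSum_of_ne (hcomm : ∀ u v, Commute (β u) (α v))
    (x y : ∀ l, Matrix (m l) (m l) R) {p r : ι} (h : p ≠ r) :
    flipSum β α p * (β (op x) * α y) * flipSum β α r = 0 := by
  simp [flipSum, flipTerm, Finset.sum_mul, Finset.mul_sum, op_mul_mul_mul_of_commute hcomm,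
    Pi.single_mul_mul_single_of_ne h.symm]

theorem flipSum_mul_mul_flipSum_self (hcomm : ∀ u v, Commute (β u) (α v))
    (x y : ∀ l, Matrix (m l) (m l) R) (p : ι) :
    flipSum β α p * (β (op x) * α y) * flipSum β α p = (x p * y p).trace • flipSum β α p := by
  simp only [flipSum, Finset.sum_mul, Finset.mul_sum, flipTerm_mul_mul_flipTerm hcomm, trace,
    diag, mul_apply, ← Finset.sum_smul, ← Finset.smul_sum]
  exact congrArg _ Finset.sum_comm

theorem blockUnit_mul_flipSum_self (hcomm : ∀ u v, Commute (β u) (α v)) (p : ι) :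
    blockUnit β α p * flipSum β α p = flipSum β α p := by
  simp [blockUnit, flipSum, flipTerm, Finset.mul_sum, mul_mul_mul_of_commute hcomm, ← op_mul,
    ← Pi.single_mul]

theorem blockUnit_mul_flipSum_of_ne (hcomm : ∀ u v, Commute (β u) (α v)) {p r : ι} (h : p ≠ r) :
    blockUnit β α p * flipSum β α r = 0 := by
  simp [blockUnit, flipSum, flipTerm, Finset.mul_sum, mul_mul_mul_of_commute hcomm, ← op_mul,
    Pi.single_mul_single_of_ne h, Pi.single_mul_single_of_ne h.symm]

variable [Fintype ι] {q : A} {w : ι → R}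

theorem blockUnit_mul_eq_smul_flipSum (hcomm : ∀ u v, Commute (β u) (α v))
    (hq : q = ∑ l, w l • flipSum β α l) (p : ι) :
    blockUnit β α p * q = w p • flipSum β α p := by
  rw [hq, Finset.mul_sum, Finset.sum_eq_single p]
  · rw [mul_smul_comm, blockUnit_mul_flipSum_self hcomm]
  · intro r _ hrp
    rw [mul_smul_comm, blockUnit_mul_flipSum_of_ne hcomm (Ne.symm hrp), smul_zero]
  · simp

theorem compress_eq_sum_smul_blockUnit_mul (hcomm : ∀ u v, Commute (β u) (α v))
    (hq : q = ∑ l, w l • flipSum β α l) (x y : ∀ l, Matrix (m l) (m l) R) :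
    q * (β (op x) * α y) * q = ∑ p, (w p * (x p * y p).trace) • (blockUnit β α p * q) := by
  calc q * (β (op x) * α y) * q
      = ∑ r, ∑ p, (w r * w p) • (flipSum β α p * (β (op x) * α y) * flipSum β α r) := by
        conv_lhs => rw [hq]
        simp only [Finset.sum_mul, Finset.mul_sum, smul_mul_assoc, mul_smul_comm, Finset.smul_sum,
          smul_smul]
    _ = ∑ p, (w p * w p) • ((x p * y p).trace • flipSum β α p) := by
        refine Finset.sum_congr rfl fun r _ => ?_
        rw [Finset.sum_eq_single r, flipSum_mul_mul_flipSum_self hcomm]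
        · intro p _ hpr
          rw [flipSum_mul_mul_flipSum_of_ne hcomm x y hpr, smul_zero]
        · simp
    _ = _ := by
        simp only [blockUnit_mul_eq_smul_flipSum hcomm hq, smul_smul, mul_right_comm]

end Blocks

section FieldBlocks

variable {ι : Type*} [Fintype ι] [DecidableEq ι] {m : ι → Type*} [∀ l, Fintype (m l)]
  [∀ l, DecidableEq (m l)] {R A F G : Type*} [Field R] [Semiring A] [Algebra R A]
  [FunLike F (∀ l, Matrix (m l) (m l) R)ᵐᵒᵖ A] [AlgHomClass F R (∀ l, Matrix (m l) (m l) R)ᵐᵒᵖ A]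
  [FunLike G (∀ l, Matrix (m l) (m l) R) A] [AlgHomClass G R (∀ l, Matrix (m l) (m l) R) A]
  {β : F} {α : G}

theorem exists_compress_eq_sum_smul_blockUnit_mul (hcomm : ∀ u v, Commute (β u) (α v)) {q : A}
    (hq : q = ∑ l, (Fintype.card (m l) : R)⁻¹ • flipSum β α l) (c : ι → R) :
    ∃ x y : ∀ l, Matrix (m l) (m l) R,
      q * (β (op x) * α y) * q = ∑ p, c p • (blockUnit β α p * q) := by
  refine ⟨fun l => c l • 1, 1, ?_⟩
  rw [compress_eq_sum_smul_blockUnit_mul hcomm hq]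
  refine Finset.sum_congr rfl fun p _ => ?_
  simp only [blockUnit_mul_eq_smul_flipSum hcomm hq, smul_smul, Pi.one_apply, mul_one, trace_smul,
    trace_one, smul_eq_mul]
  -- no case split on empty blocks: `0⁻¹ = 0`
  have hinv (a : R) : a⁻¹ * a * a⁻¹ = a⁻¹ := by simpa using mul_inv_mul_cancel a⁻¹
  rw [mul_left_comm, mul_assoc, hinv]

theorem compress_set_eq_span (hcomm : ∀ u v, Commute (β u) (α v)) {q : A}
    (hq : q = ∑ l, (Fintype.card (m l) : R)⁻¹ • flipSum β α l) :
    {z : A | ∃ x y : ∀ l, Matrix (m l) (m l) R, z = q * (β (op x) * α y) * q} =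
      Submodule.span R (Set.range fun l => blockUnit β α l * q) := by
  ext z
  rw [SetLike.mem_coe, Submodule.mem_span_range_iff_exists_fun]
  constructor
  · rintro ⟨x, y, rfl⟩
    exact ⟨_, (compress_eq_sum_smul_blockUnit_mul hcomm hq x y).symm⟩
  · rintro ⟨c, rfl⟩
    obtain ⟨x, y, h⟩ := exists_compress_eq_sum_smul_blockUnit_mul hcomm hq c
    exact ⟨x, y, h.symm⟩

end FieldBlocks

/-- For `N = ⊕_l M_{n_l}(ℂ)` with minimal central projections `e^{(l)}`, the compressed set
`q (β(N^op) ⊗ α(N)) q` equals the linear span of the elements `(β(e^{(l)}) ⊗ α(e^{(l)})) q`;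
in particular every element of it is of the form `Σ_l λ_l (β(e^{(l)}) ⊗ α(e^{(l)})) q`. -/
theorem stmt5 (k : ℕ) (n : Fin k → ℕ) {A : Type*} [Ring A] [StarRing A] [Algebra ℂ A]
    (α : (∀ l, Matrix (Fin (n l)) (Fin (n l)) ℂ) →⋆ₐ[ℂ] A)
    (β : (∀ l, Matrix (Fin (n l)) (Fin (n l)) ℂ)ᵐᵒᵖ →⋆ₐ[ℂ] A)
    (hcomm : ∀ x y, Commute (β x) (α y)) (q : A)
    (hq : q = ∑ l, ((n l : ℂ))⁻¹ • ∑ i : Fin (n l), ∑ j : Fin (n l),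
        β (op (Pi.single l (Matrix.single j i (1 : ℂ)))) *
          α (Pi.single l (Matrix.single i j (1 : ℂ)))) :
    {z : A | ∃ x y : ∀ l, Matrix (Fin (n l)) (Fin (n l)) ℂ,
        z = q * (β (op x) * α y) * q}
      = (Submodule.span ℂ (Set.range fun l : Fin k =>
          β (op (Pi.single l (1 : Matrix (Fin (n l)) (Fin (n l)) ℂ))) *
            α (Pi.single l 1) * q) : Set A) ∧
    ∀ z ∈ {z : A | ∃ x y : ∀ l, Matrix (Fin (n l)) (Fin (n l)) ℂ,
        z = q * (β (op x) * α y) * q},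
      ∃ lam : Fin k → ℂ, z = ∑ l, lam l •
        (β (op (Pi.single l (1 : Matrix (Fin (n l)) (Fin (n l)) ℂ))) *
          α (Pi.single l 1) * q) := by
  have hq' : q = ∑ l, (Fintype.card (Fin (n l)) : ℂ)⁻¹ • flipSum β α l := by
    simp only [Fintype.card_fin]
    exact hq
  have hspan := compress_set_eq_span hcomm hq'
  refine ⟨hspan, fun z hz => ?_⟩
  rw [hspan, SetLike.mem_coe, Submodule.mem_span_range_iff_exists_fun] at hz
  obtain ⟨lam, hlam⟩ := hz
  exact ⟨lam, hlam.symm⟩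
end

section
/- Let α : M_n(ℂ) → B(H) and β : M_n(ℂ)^op → B(K) be unital injective *-homomorphisms and set q = (1/n) Σ_{ij} β(E_{ji}) ⊗ α(E_{ij}). If T ∈ B(K ⊗ H) satisfies T = q (β(x) ⊗ α(y)) q for some x, y ∈ M_n(ℂ) (more generally T lies in the linear span of such elements) and T* T = q, then T = λ q for a unique scalar λ with |λ| = 1. -/
open Matrix MulOpposite

/-!
With `S = ∑ i j, β (E_ji) * α (E_ij)` we have `q = S / n`. Multiplying out matrix units gives
`S * (β x * α y) * S = tr (x y) • S`; in particular `S * S = n • S`, and `S` is self-adjoint, so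
`q` is a projection and every compression `q * (β x * α y) * q` is a multiple of `q`. Hence
`T = λ • q`, and `T⋆ T = |λ|² • q = q` forces `|λ| = 1` as soon as `q ≠ 0`. Finally `q ≠ 0`
because `∑ i, α (E_ki) * S * β (E_il) = α (E_kl)` and `α` is injective.
-/

theorem existsUnique_norm_eq_one_smul_of_star_mul_self_eq {𝕜 A : Type*} [RCLike 𝕜]
    [NonUnitalRing A] [StarRing A] [Module 𝕜 A] [IsScalarTower 𝕜 A A] [SMulCommClass 𝕜 A A]
    [StarModule 𝕜 A] {q T : A} (hq : star q * q = q) (hq0 : q ≠ 0) (hT : T ∈ 𝕜 ∙ q)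
    (hTT : star T * T = q) : ∃! c : 𝕜, ‖c‖ = 1 ∧ T = c • q := by
  obtain ⟨c, rfl⟩ := Submodule.mem_span_singleton.1 hT
  have hinj := smul_left_injective 𝕜 hq0
  have hc : ‖c‖ = 1 := by
    have : ((‖c‖ : 𝕜) ^ 2) • q = (1 : 𝕜) • q := by
      calc ((‖c‖ : 𝕜) ^ 2) • q = star (c • q) * (c • q) := by
            rw [star_smul, smul_mul_smul_comm, hq, ← RCLike.conj_mul]; rfl
        _ = (1 : 𝕜) • q := by rw [hTT, one_smul]
    exact (pow_eq_one_iff_of_nonneg (norm_nonneg c) two_ne_zero).1 (by exact_mod_cast hinj this)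
  exact ⟨c, ⟨hc, rfl⟩, fun d ⟨_, hd⟩ => hinj hd.symm⟩

theorem Matrix.smul_single_one {R m n : Type*} [MulZeroOneClass R] [DecidableEq m] [DecidableEq n]
    (c : R) (i : m) (j : n) :
    c • single i j (1 : R) = single i j c := by
  rw [smul_single, smul_eq_mul, mul_one]

theorem Matrix.single_one_mul_single_one {R l m n : Type*} [Semiring R] [Fintype m]
    [DecidableEq l] [DecidableEq m] [DecidableEq n] (i : l) (j k : m) (p : n) :
    single i j (1 : R) * single k p (1 : R) = if j = k then single i p 1 else 0 := by
  split_ifs with h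
  · rw [h, single_mul_single_same, mul_one]
  · exact single_mul_single_of_ne _ _ _ _ h _

section MatrixUnitSum

variable {R m A : Type*} [CommSemiring R] [Fintype m] [DecidableEq m] [Semiring A]
  {F G : Type*} [FunLike F (Matrix m m R) A] [FunLike G (Matrix m m R)ᵐᵒᵖ A]

/-- `(Fintype.card m)⁻¹ • matrixUnitSum α β` is the projection `q` of the statement. -/
def matrixUnitSum (α : F) (β : G) : A :=
  ∑ i, ∑ j, β (op (single j i 1)) * α (single i j 1)

theorem star_matrixUnitSum [StarRing R] [StarRing A] [StarHomClass F (Matrix m m R) A]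
    [StarHomClass G (Matrix m m R)ᵐᵒᵖ A] {α : F} {β : G} (hcomm : ∀ x y, Commute (β x) (α y)) :
    star (matrixUnitSum α β) = matrixUnitSum α β := by
  simp only [matrixUnitSum, star_sum, star_mul, ← map_star, ← op_star,
    star_eq_conjTranspose, conjTranspose_single, star_one, (hcomm _ _).eq]
  exact Finset.sum_comm

variable [Algebra R A] [AlgHomClass F R (Matrix m m R) A] [AlgHomClass G R (Matrix m m R)ᵐᵒᵖ A]
  {α : F} {β : G}

theorem map_mul_map_mul_map_mul_map (hcomm : ∀ x y, Commute (β x) (α y))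
    (u v : (Matrix m m R)ᵐᵒᵖ) (x y : Matrix m m R) :
    β u * α x * (β v * α y) = β (u * v) * α (x * y) := by
  rw [(hcomm v x).symm.mul_mul_mul_comm, map_mul, map_mul]

theorem matrixUnitSum_mul_mul_matrixUnitSum (hcomm : ∀ x y, Commute (β x) (α y))
    (x y : Matrix m m R) :
    matrixUnitSum α β * (β (op x) * α y) * matrixUnitSum α β =
      (x * y).trace • matrixUnitSum α β := by
  have summand : ∀ i j k l : m, β (op (single j i 1)) * α (single i j 1) * (β (op x) * α y) *
      (β (op (single l k 1)) * α (single k l 1)) =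
        (x k j * y j k) • (β (op (single l i 1)) * α (single i l 1)) := by
    intro i j k l
    rw [map_mul_map_mul_map_mul_map hcomm, map_mul_map_mul_map_mul_map hcomm, ← op_mul, ← op_mul,
      ← mul_assoc, single_mul_mul_single, single_mul_mul_single]
    simp only [one_mul, mul_one]
    rw [← smul_single_one, ← smul_single_one (y j k), op_smul, map_smul, map_smul,
      smul_mul_smul_comm]
  simp only [matrixUnitSum, Finset.sum_mul, Finset.mul_sum, summand, trace, mul_apply, diag_apply,
    Finset.sum_smul, Finset.smul_sum]
  refine (Finset.sum_congr rfl fun k _ => Finset.sum_comm).trans ?_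
  refine Finset.sum_comm.trans ?_
  exact Finset.sum_congr rfl fun i _ => Finset.sum_comm

theorem matrixUnitSum_mul_self (hcomm : ∀ x y, Commute (β x) (α y)) :
    matrixUnitSum α β * matrixUnitSum α β = (Fintype.card m : R) • matrixUnitSum α β := by
  simpa [trace_one] using matrixUnitSum_mul_mul_matrixUnitSum hcomm 1 1

theorem sum_map_single_mul_matrixUnitSum_mul_map_single (hcomm : ∀ x y, Commute (β x) (α y))
    (k l : m) :
    ∑ i, α (single k i 1) * matrixUnitSum α β * β (op (single i l 1)) = α (single k l 1) := by
  have summand : ∀ i a b : m, α (single k i 1) * (β (op (single b a 1)) * α (single a b 1)) *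
      β (op (single i l 1)) =
        β (op (single i l 1 * single b a 1)) * α (single k i 1 * single a b 1) := by
    intro i a b
    calc α (single k i 1) * (β (op (single b a 1)) * α (single a b 1)) * β (op (single i l 1))
        = β 1 * α (single k i 1) * (β (op (single b a 1)) * α (single a b 1)) *
            (β (op (single i l 1)) * α 1) := by
          rw [map_one, map_one, one_mul, mul_one]
      _ = _ := by
          rw [map_mul_map_mul_map_mul_map hcomm, map_mul_map_mul_map_mul_map hcomm, one_mul,
            mul_one, op_mul]
  simp only [matrixUnitSum, Finset.mul_sum, Finset.sum_mul, summand, single_one_mul_single_one,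
    apply_ite op, apply_ite β, apply_ite α, op_zero, map_zero, ite_mul, mul_ite, zero_mul, mul_zero,
    Finset.sum_ite_irrel, Finset.sum_ite_eq, Finset.mem_univ, ↓reduceIte, Finset.sum_const_zero]
  rw [← Finset.sum_mul, ← map_sum, ← Finset.op_sum, sum_single_one, op_one, map_one, one_mul]

theorem matrixUnitSum_ne_zero [Nontrivial R] [Nonempty m] (hcomm : ∀ x y, Commute (β x) (α y))
    (hα : Function.Injective α) : matrixUnitSum α β ≠ 0 := by
  intro h
  obtain ⟨k⟩ := ‹Nonempty m›
  have := sum_map_single_mul_matrixUnitSum_mul_map_single hcomm k k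
  simp only [h, mul_zero, zero_mul, Finset.sum_const_zero] at this
  simpa using congrFun₂ (hα (this.symm.trans (map_zero α).symm)) k k

end MatrixUnitSum

theorem stmt6_general (n : ℕ) (hn : 0 < n)
    {A : Type*} [Ring A] [StarRing A] [Algebra ℂ A] [StarModule ℂ A]
    (α : Matrix (Fin n) (Fin n) ℂ →⋆ₐ[ℂ] A) (hα : Function.Injective α)
    (β : (Matrix (Fin n) (Fin n) ℂ)ᵐᵒᵖ →⋆ₐ[ℂ] A)
    (hcomm : ∀ x y, Commute (β x) (α y)) (q : A)
    (hq : q = (n : ℂ)⁻¹ • ∑ i : Fin n, ∑ j : Fin n,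
        β (op (Matrix.single j i (1 : ℂ))) * α (Matrix.single i j (1 : ℂ)))
    (T : A)
    (hT : T ∈ Submodule.span ℂ {z : A | ∃ x y : Matrix (Fin n) (Fin n) ℂ,
        z = q * (β (op x) * α y) * q})
    (hTT : star T * T = q) :
    ∃! lam : ℂ, ‖lam‖ = 1 ∧ T = lam • q := by
  replace hq : q = (n : ℂ)⁻¹ • matrixUnitSum α β := hq
  have hn' : (n : ℂ) ≠ 0 := Nat.cast_ne_zero.2 hn.ne'
  have : Nonempty (Fin n) := ⟨⟨0, hn⟩⟩
  have hq0 : q ≠ 0 := hq ▸ smul_ne_zero (inv_ne_zero hn') (matrixUnitSum_ne_zero hcomm hα)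
  have hproj : star q * q = q := by
    rw [hq, star_smul, star_matrixUnitSum hcomm, smul_mul_smul_comm, matrixUnitSum_mul_self hcomm,
      Fintype.card_fin, smul_smul, star_inv₀, star_natCast, inv_mul_cancel_right₀ hn']
  have hspan : T ∈ ℂ ∙ q := by
    refine Submodule.span_le.2 ?_ hT
    rintro _ ⟨x, y, rfl⟩
    refine Submodule.mem_span_singleton.2 ⟨(n : ℂ)⁻¹ * (x * y).trace, ?_⟩
    rw [hq, smul_mul_assoc, mul_smul_comm, smul_mul_assoc,
      matrixUnitSum_mul_mul_matrixUnitSum hcomm, smul_smul, smul_smul, smul_smul]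
    ring_nf
  exact existsUnique_norm_eq_one_smul_of_star_mul_self_eq hproj hq0 hspan hTT

/-- If `T` lies in the span of the compressions `q (β(x) ⊗ α(y)) q` and `T* T = q`, with
`α, β` injective, then `T = λ • q` for a unique scalar `λ` of modulus `1`. -/
theorem stmt6 (n : ℕ) (hn : 0 < n)
    {A : Type*} [Ring A] [StarRing A] [Algebra ℂ A] [StarModule ℂ A] [Nontrivial A]
    (α : Matrix (Fin n) (Fin n) ℂ →⋆ₐ[ℂ] A) (hα : Function.Injective α)
    (β : (Matrix (Fin n) (Fin n) ℂ)ᵐᵒᵖ →⋆ₐ[ℂ] A) (hβ : Function.Injective β)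
    (hcomm : ∀ x y, Commute (β x) (α y)) (q : A)
    (hq : q = (n : ℂ)⁻¹ • ∑ i : Fin n, ∑ j : Fin n,
        β (op (Matrix.single j i (1 : ℂ))) * α (Matrix.single i j (1 : ℂ)))
    (T : A)
    (hT : T ∈ Submodule.span ℂ {z : A | ∃ x y : Matrix (Fin n) (Fin n) ℂ,
        z = q * (β (op x) * α y) * q})
    (hTT : star T * T = q) :
    ∃! lam : ℂ, ‖lam‖ = 1 ∧ T = lam • q :=
  stmt6_general n hn α hα β hcomm q hq T hT hTT
end

section
/- Let A and B be C*-algebras and f : A → M(B) a *-homomorphism into the multiplier algebra. Suppose there is an approximate unit (u_λ) of A such that f(u_λ) converges strictly to an element e ∈ M(B). Then: (i) e is a projection (e = e* = e²); (ii) e f(a) = f(a) = f(a) e for all a ∈ A; (iii) for every approximate unit (v_μ) of A, f(v_μ) converges strictly to the same element e. -/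
/-!
Strict limits are unique because `j(B)` is an essential ideal, and they are compatible with
multiplication by a fixed multiplier and with the involution. Since `f(u_λ) f(a) → f(a)` in norm,
comparing strict limits gives `e f(a) = f(a)`, and symmetrically `f(a) e = f(a)`; self-adjointness
and idempotence of `e` follow the same way. For a second approximate unit `(v_μ)`, the
contractions `f(v_μ)` act as approximate identities on each `f(u_λ) j(b)`, hence, by
equicontinuity, on their limit `e j(b)`; as `f(v_μ) e = f(v_μ)`, this says `f(v_μ) j(b) → e j(b)`.
-/

open Filter Topology
open scoped CStarAlgebra NNReal

section StrictConvergence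

variable {ι κ B M : Type*}

theorem tendsto_const_mul_of_isSelfAdjoint [Mul M] [StarMul M] [TopologicalSpace M]
    [ContinuousStar M] {u : ι → M} {l : Filter ι} (hu : ∀ i, IsSelfAdjoint (u i))
    (h : ∀ a, Tendsto (fun i => u i * a) l (𝓝 a)) (a : M) : Tendsto (fun i => a * u i) l (𝓝 a) := by
  simpa only [star_mul, star_star, fun i => (hu i).star_eq] using (h (star a)).star

theorem isClosed_setOf_tendsto_mul_self [NonUnitalSeminormedRing M] {w : κ → M} {C : ℝ≥0}
    (hw : ∀ k, ‖w k‖ ≤ C) (l : Filter κ) :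
    IsClosed {z | Tendsto (fun k => w k * z) l (𝓝 z)} := by
  refine (LipschitzWith.uniformEquicontinuous (fun k z => w k * z) C fun k => ?_).equicontinuous
    |>.isClosed_setOfPred_tendsto continuous_id
  refine LipschitzWith.of_dist_le_mul fun x y => ?_
  rw [dist_eq_norm, dist_eq_norm, ← mul_sub]
  exact (norm_mul_le _ _).trans (mul_le_mul_of_nonneg_right (hw k) (norm_nonneg _))

def StrictTendsto [Mul M] [TopologicalSpace M] (j : B → M) (m : ι → M) (l : Filter ι) (x : M) :
    Prop :=
  ∀ b, Tendsto (fun i => m i * j b) l (𝓝 (x * j b)) ∧ Tendsto (fun i => j b * m i) l (𝓝 (j b * x))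

namespace StrictTendsto

variable {j : B → M} {m : ι → M} {l : Filter ι} {e : M}

theorem unique [NonUnitalRing M] [TopologicalSpace M] [T2Space M] [l.NeBot]
    (hess : ∀ x : M, (∀ b, x * j b = 0 ∧ j b * x = 0) → x = 0) {e' : M}
    (h : StrictTendsto j m l e) (h' : StrictTendsto j m l e') : e = e' :=
  sub_eq_zero.mp <| hess _ fun b =>
    ⟨by rw [sub_mul, sub_eq_zero]; exact tendsto_nhds_unique (h b).1 (h' b).1,
     by rw [mul_sub, sub_eq_zero]; exact tendsto_nhds_unique (h b).2 (h' b).2⟩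

theorem mul_const [Semigroup M] [TopologicalSpace M] [ContinuousMul M]
    (hleft : ∀ (x : M) b, ∃ b', j b' = x * j b) (h : StrictTendsto j m l e) (x : M) :
    StrictTendsto j (fun i => m i * x) l (e * x) := fun b => by
  obtain ⟨b', hb'⟩ := hleft x b
  refine ⟨?_, ?_⟩
  · simpa only [mul_assoc, ← hb'] using (h b').1
  · simpa only [← mul_assoc] using (h b).2.mul_const x

theorem const_mul [Semigroup M] [TopologicalSpace M] [ContinuousMul M]
    (hright : ∀ (x : M) b, ∃ b', j b' = j b * x) (h : StrictTendsto j m l e) (x : M) :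
    StrictTendsto j (fun i => x * m i) l (x * e) := fun b => by
  obtain ⟨b', hb'⟩ := hright x b
  refine ⟨?_, ?_⟩
  · simpa only [mul_assoc] using (h b).1.const_mul x
  · simpa only [← mul_assoc, ← hb'] using (h b').2

protected theorem star [InvolutiveStar B] [Mul M] [StarMul M] [TopologicalSpace M]
    [ContinuousStar M] (hj : ∀ b, j (star b) = star (j b)) (h : StrictTendsto j m l e) :
    StrictTendsto j (fun i => star (m i)) l (star e) := fun b => by
  have hb : star (j (star b)) = j b := by rw [hj, star_star]
  refine ⟨?_, ?_⟩
  · simpa only [star_mul, hb] using (h (star b)).2.star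
  · simpa only [star_mul, hb] using (h (star b)).1.star

theorem isSelfAdjoint [InvolutiveStar B] [NonUnitalRing M] [StarMul M] [TopologicalSpace M]
    [T2Space M] [ContinuousStar M] [l.NeBot]
    (hess : ∀ x : M, (∀ b, x * j b = 0 ∧ j b * x = 0) → x = 0)
    (hj : ∀ b, j (star b) = star (j b)) (h : StrictTendsto j m l e)
    (hm : ∀ i, IsSelfAdjoint (m i)) : IsSelfAdjoint e := by
  have h' := h.star hj
  simp only [fun i => (hm i).star_eq] at h'
  exact h'.unique hess h

theorem of_tendsto_mul_of_isSelfAdjoint [InvolutiveStar B] [Mul M] [StarMul M]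
    [TopologicalSpace M] [ContinuousStar M] (hj : ∀ b, j (star b) = star (j b))
    (hm : ∀ i, IsSelfAdjoint (m i)) (he : IsSelfAdjoint e)
    (h : ∀ b, Tendsto (fun i => m i * j b) l (𝓝 (e * j b))) : StrictTendsto j m l e := fun b => by
  have hb : star (j (star b)) = j b := by rw [hj, star_star]
  refine ⟨h b, ?_⟩
  simpa only [star_mul, hb, fun i => (hm i).star_eq, he.star_eq] using (h (star b)).star

theorem tendsto_mul_of_forall_tendsto_mul [NonUnitalNormedRing M] [l.NeBot]
    (h : StrictTendsto j m l e) {w : κ → M} {l' : Filter κ} {C : ℝ≥0} (hw : ∀ k, ‖w k‖ ≤ C)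
    (hwe : ∀ k, w k * e = w k) (hwm : ∀ i, Tendsto (fun k => w k * m i) l' (𝓝 (m i))) (b : B) :
    Tendsto (fun k => w k * j b) l' (𝓝 (e * j b)) := by
  have hmem : e * j b ∈ {z | Tendsto (fun k => w k * z) l' (𝓝 z)} :=
    (isClosed_setOf_tendsto_mul_self hw l').mem_of_tendsto (h b).1 <| .of_forall fun i => by
      simpa only [Set.mem_ofPred_eq, ← mul_assoc] using (hwm i).mul_const (j b)
  simpa only [Set.mem_ofPred_eq, ← mul_assoc, hwe] using hmem

section

variable [NonUnitalRing M] [TopologicalSpace M] [T2Space M] [ContinuousMul M] [l.NeBot]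

theorem mul_eq_of_tendsto_mul_const
    (hess : ∀ x : M, (∀ b, x * j b = 0 ∧ j b * x = 0) → x = 0)
    (hleft : ∀ (x : M) b, ∃ b', j b' = x * j b)
    (h : StrictTendsto j m l e) {y : M} (hy : Tendsto (fun i => m i * y) l (𝓝 y)) :
    e * y = y :=
  (h.mul_const hleft y).unique hess fun _ => ⟨hy.mul_const _, hy.const_mul _⟩

theorem mul_eq_of_tendsto_const_mul
    (hess : ∀ x : M, (∀ b, x * j b = 0 ∧ j b * x = 0) → x = 0)
    (hright : ∀ (x : M) b, ∃ b', j b' = j b * x)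
    (h : StrictTendsto j m l e) {y : M} (hy : Tendsto (fun i => y * m i) l (𝓝 y)) :
    y * e = y :=
  (h.const_mul hright y).unique hess fun _ => ⟨hy.mul_const _, hy.const_mul _⟩

theorem mul_self_eq
    (hess : ∀ x : M, (∀ b, x * j b = 0 ∧ j b * x = 0) → x = 0)
    (hright : ∀ (x : M) b, ∃ b', j b' = j b * x)
    (h : StrictTendsto j m l e) (hm : ∀ i, e * m i = m i) : e * e = e := by
  have h' := h.const_mul hright e
  simp only [hm] at h'
  exact h'.unique hess h

end

end StrictTendsto

end StrictConvergence

theorem stmt11_general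
    {A : Type*} [NonUnitalCStarAlgebra A]
    {B : Type*} [NonUnitalCStarAlgebra B]
    {M : Type*} [CStarAlgebra M]
    (j : B →⋆ₙₐ[ℂ] M)
    (hideal : ∀ (m : M) (b : B), (∃ b', j b' = m * j b) ∧ (∃ b', j b' = j b * m))
    (hess : ∀ m : M, (∀ b : B, m * j b = 0 ∧ j b * m = 0) → m = 0)
    (f : A →⋆ₙₐ[ℂ] M)
    {ι : Type*} [Nonempty ι] [SemilatticeSup ι]
    (u : ι → A)
    (hu_pos : ∀ i, ∃ v, u i = star v * v)
    (hu_approx : ∀ a : A, Tendsto (fun i => u i * a) atTop (𝓝 a))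
    (e : M)
    (hstrict : ∀ b : B, Tendsto (fun i => f (u i) * j b) atTop (𝓝 (e * j b)) ∧
        Tendsto (fun i => j b * f (u i)) atTop (𝓝 (j b * e))) :
    (IsSelfAdjoint e ∧ e * e = e) ∧
      (∀ a : A, e * f a = f a ∧ f a * e = f a) ∧
      (∀ (κ : Type) (_ : Nonempty κ) (_ : SemilatticeSup κ) (v : κ → A),
        (∀ i, ∃ w, v i = star w * w) → (∀ i, ‖v i‖ ≤ 1) →
        (∀ i i', i ≤ i' → ∃ w, v i' - v i = star w * w) →
        (∀ a : A, Tendsto (fun i => v i * a) atTop (𝓝 a)) →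
        ∀ b : B, Tendsto (fun i => f (v i) * j b) atTop (𝓝 (e * j b)) ∧
          Tendsto (fun i => j b * f (v i)) atTop (𝓝 (j b * e))) := by
  have hstrict : StrictTendsto j (fun i => f (u i)) atTop e := hstrict
  have hleft (m : M) (b : B) := (hideal m b).1
  have hright (m : M) (b : B) := (hideal m b).2
  have hf (a : A) : Tendsto f (𝓝 a) (𝓝 (f a)) := (map_continuous f).tendsto a
  have hu_sa i : IsSelfAdjoint (u i) := by obtain ⟨w, hw⟩ := hu_pos i; exact hw ▸ .star_mul_self w
  have hfu_sa i : IsSelfAdjoint (f (u i)) := (hu_sa i).map f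
  have hunit (a : A) : e * f a = f a ∧ f a * e = f a :=
    ⟨hstrict.mul_eq_of_tendsto_mul_const hess hleft <| by
      simpa only [Function.comp_def, map_mul] using (hf a).comp (hu_approx a),
     hstrict.mul_eq_of_tendsto_const_mul hess hright <| by
      simpa only [Function.comp_def, map_mul] using
        (hf a).comp (tendsto_const_mul_of_isSelfAdjoint hu_sa hu_approx a)⟩
  have he_sa : IsSelfAdjoint e := hstrict.isSelfAdjoint hess (map_star j) hfu_sa
  refine ⟨⟨he_sa, hstrict.mul_self_eq hess hright fun i => (hunit _).1⟩, hunit, ?_⟩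
  intro κ _ _ v hv_pos hv_norm _ hv_approx
  have hfv_sa k : IsSelfAdjoint (f (v k)) := by
    obtain ⟨w, hw⟩ := hv_pos k; exact (hw ▸ .star_mul_self w : IsSelfAdjoint (v k)).map f
  refine StrictTendsto.of_tendsto_mul_of_isSelfAdjoint (map_star j) hfv_sa he_sa fun b => ?_
  refine hstrict.tendsto_mul_of_forall_tendsto_mul (C := 1) (fun k => ?_) (fun k => (hunit _).2)
    (fun i => by simpa only [Function.comp_def, map_mul] using (hf _).comp (hv_approx (u i))) b
  exact (NonUnitalStarAlgHom.norm_apply_le f _).trans (hv_norm k)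

/-- Let `M` be a model of the multiplier algebra of the C*-algebra `B` (a unital C*-algebra
containing `B` as an essential ideal via `j`). If `f : A → M` is a *-homomorphism such that
`f(u_λ)` converges strictly to `e ∈ M` for some approximate unit `(u_λ)` of `A`, then `e` is
a projection, `e f(a) = f(a) = f(a) e` for all `a ∈ A`, and every approximate unit of `A` is
mapped by `f` to a net converging strictly to the same `e`. -/
theorem stmt11
    {A : Type*} [NonUnitalCStarAlgebra A]
    {B : Type*} [NonUnitalCStarAlgebra B]
    {M : Type*} [CStarAlgebra M]
    (j : B →⋆ₙₐ[ℂ] M) (hj : Function.Injective j)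
    (hideal : ∀ (m : M) (b : B), (∃ b', j b' = m * j b) ∧ (∃ b', j b' = j b * m))
    (hess : ∀ m : M, (∀ b : B, m * j b = 0 ∧ j b * m = 0) → m = 0)
    (f : A →⋆ₙₐ[ℂ] M)
    {ι : Type*} [Nonempty ι] [SemilatticeSup ι]
    (u : ι → A)
    (hu_pos : ∀ i, ∃ v, u i = star v * v) (hu_norm : ∀ i, ‖u i‖ ≤ 1)
    (hu_mono : ∀ i i', i ≤ i' → ∃ w, u i' - u i = star w * w)
    (hu_approx : ∀ a : A, Tendsto (fun i => u i * a) atTop (𝓝 a))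
    (e : M)
    (hstrict : ∀ b : B, Tendsto (fun i => f (u i) * j b) atTop (𝓝 (e * j b)) ∧
        Tendsto (fun i => j b * f (u i)) atTop (𝓝 (j b * e))) :
    (IsSelfAdjoint e ∧ e * e = e) ∧
      (∀ a : A, e * f a = f a ∧ f a * e = f a) ∧
      (∀ (κ : Type) (_ : Nonempty κ) (_ : SemilatticeSup κ) (v : κ → A),
        (∀ i, ∃ w, v i = star w * w) → (∀ i, ‖v i‖ ≤ 1) →
        (∀ i i', i ≤ i' → ∃ w, v i' - v i = star w * w) →
        (∀ a : A, Tendsto (fun i => v i * a) atTop (𝓝 a)) →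
        ∀ b : B, Tendsto (fun i => f (v i) * j b) atTop (𝓝 (e * j b)) ∧
          Tendsto (fun i => j b * f (v i)) atTop (𝓝 (j b * e))) :=
  stmt11_general j hideal hess f u hu_pos hu_approx e hstrict
end

section
/- Let H be a Hilbert space and V ∈ B(H ⊗ H) a unitary satisfying the pentagon equation V₁₂ V₁₃ V₂₃ = V₂₃ V₁₂ on H ⊗ H ⊗ H. Then the norm-closed linear span C(V) of the operators (id ⊗ ω_{ξ,η})(Σ V), for ξ, η ∈ H, is closed under multiplication (i.e. C(V) is a norm-closed subalgebra of B(H)). -/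
/-!
Write `S(ξ, η) = (id ⊗ ω_{ξ,η})(Σ V)` and let `J x c = x ⊗ c`, `K x a = a ⊗ x` embed `H ⊗ H`
into `H ⊗ H ⊗ H`, so that `V₁₂ J = J V` and `V₂₃ K = K V`. Through these intertwinings the
product `S(ξ, η) S(ξ', η')` becomes a matrix coefficient of `V₂₃ V₁₂`, which the pentagon
equation turns into one of `V₁₂ V₁₃ V₂₃`:
`S(ξ, η) S(ξ', η') = Θ(V* (ξ' ⊗ ξ), V (η' ⊗ η))`, where `⟪ζ', Θ(u, w) ζ⟫ = ⟪u ⊗ ζ', V₁₃ (ζ ⊗ w)⟫`.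
On elementary tensors `Θ(a ⊗ b, p ⊗ q) = ⟪b, p⟫ S(a, q)`, and `Θ` is continuous in each
variable, so it takes values in `C(V)`. Hence products of generators lie in `C(V)`, and by
continuity of multiplication so do all products.
-/

open scoped InnerProductSpace
open Submodule (span)

noncomputable section

theorem map_mem_of_mem_closure_span {R R₂ X Y : Type*} [Semiring R] [Semiring R₂] {σ : R →+* R₂}
    [TopologicalSpace X] [AddCommMonoid X] [Module R X]
    [TopologicalSpace Y] [AddCommMonoid Y] [Module R₂ Y]
    (f : X →SL[σ] Y) {M : Submodule R₂ Y} (hM : IsClosed (M : Set Y)) {s : Set X}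
    (h : ∀ x ∈ s, f x ∈ M) {x : X} (hx : x ∈ closure (span R s : Set X)) : f x ∈ M := by
  have hspan : span R s ≤ M.comap (f : X →ₛₗ[σ] Y) := Submodule.span_le.2 h
  exact closure_minimal (fun y hy => hspan hy) (hM.preimage f.continuous) hx

theorem mul_mem_closure_span {𝕜 A : Type*} [NontriviallyNormedField 𝕜] [NormedRing A]
    [NormedAlgebra 𝕜 A] {s : Set A}
    (h : ∀ a ∈ s, ∀ b ∈ s, a * b ∈ closure (span 𝕜 s : Set A))
    {x y : A} (hx : x ∈ closure (span 𝕜 s : Set A)) (hy : y ∈ closure (span 𝕜 s : Set A)) :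
    x * y ∈ closure (span 𝕜 s : Set A) := by
  have hM : IsClosed ((span 𝕜 s).topologicalClosure : Set A) :=
    (span 𝕜 s).isClosed_topologicalClosure
  rw [← Submodule.topologicalClosure_coe] at h hx hy ⊢
  have hleft : ∀ a ∈ s, a * y ∈ (span 𝕜 s).topologicalClosure := fun a ha =>
    map_mem_of_mem_closure_span (ContinuousLinearMap.mul 𝕜 A a) hM (h a ha) hy
  exact map_mem_of_mem_closure_span ((ContinuousLinearMap.mul 𝕜 A).flip y) hM hleft hx

section InnerProduct

variable {X : Type*} [NormedAddCommGroup X] [InnerProductSpace ℂ X]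

-- `inner_self_eq_norm_sq_to_K` with `Complex.ofReal` in place of `RCLike.ofReal`, so that
-- `push_cast` and `ring` see a single coercion.
theorem inner_self_eq_ofReal_norm_sq (x : X) : ⟪x, x⟫_ℂ = (‖x‖ : ℂ) ^ 2 :=
  inner_self_eq_norm_sq_to_K x

theorem norm_eq_of_inner_self_eq {x : X} {r : ℝ} (hr : 0 ≤ r) (h : ⟪x, x⟫_ℂ = (r : ℂ) ^ 2) :
    ‖x‖ = r := by
  rw [inner_self_eq_ofReal_norm_sq, ← Complex.ofReal_pow, ← Complex.ofReal_pow] at h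
  exact (pow_left_inj₀ (norm_nonneg x) hr two_ne_zero).1 (Complex.ofReal_injective h)

theorem eq_of_forall_inner_eq_of_dense_span {s : Set X} (hs : Dense (span ℂ s : Set X))
    {x y : X} (h : ∀ v ∈ s, ⟪v, x⟫_ℂ = ⟪v, y⟫_ℂ) : x = y := by
  have : innerSL ℂ x = innerSL ℂ y := ContinuousLinearMap.ext_on hs fun v hv => by
    rw [innerSL_apply_apply, innerSL_apply_apply, ← inner_conj_symm, h v hv, inner_conj_symm]
  exact ext_inner_right ℂ fun v => by simpa using congr($this v)

theorem inner_linearCombination_self {ι Y : Type*} [NormedAddCommGroup Y] [InnerProductSpace ℂ Y]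
    {q : ι → X} {r : ι → Y} {k : ℂ} (h : ∀ i j, ⟪r i, r j⟫_ℂ = k * ⟪q i, q j⟫_ℂ)
    (f : ι →₀ ℂ) :
    ⟪Finsupp.linearCombination ℂ r f, Finsupp.linearCombination ℂ r f⟫_ℂ
      = k * ⟪Finsupp.linearCombination ℂ q f, Finsupp.linearCombination ℂ q f⟫_ℂ := by
  simp only [Finsupp.linearCombination_apply, Finsupp.sum, sum_inner, inner_sum,
    inner_smul_left, inner_smul_right, h, Finset.mul_sum]
  refine Finset.sum_congr rfl fun i _ => Finset.sum_congr rfl fun j _ => ?_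
  ring

end InnerProduct

section TensorEmbedding

variable {H₁ H₂ H₃ E F : Type*}
  [NormedAddCommGroup H₁] [InnerProductSpace ℂ H₁]
  [NormedAddCommGroup H₂] [InnerProductSpace ℂ H₂]
  [NormedAddCommGroup H₃] [InnerProductSpace ℂ H₃]
  [NormedAddCommGroup E] [InnerProductSpace ℂ E]
  [NormedAddCommGroup F] [InnerProductSpace ℂ F]

/-- `t a b` plays the role of `a ⊗ b`, identifying `E` with the Hilbert tensor product `H₁ ⊗ H₂`. -/
structure IsTensorEmbedding₂ (t : H₁ →ₗ[ℂ] H₂ →ₗ[ℂ] E) : Prop where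
  inner_apply_apply (a a' b b') : ⟪t a b, t a' b'⟫_ℂ = ⟪a, a'⟫_ℂ * ⟪b, b'⟫_ℂ
  dense_span : Dense (span ℂ {z | ∃ a b, z = t a b} : Set E)

structure IsTensorEmbedding₃ (T : H₁ → H₂ → H₃ →ₗ[ℂ] F) : Prop where
  inner_apply_apply_apply (a b c a' b' c') :
    ⟪T a b c, T a' b' c'⟫_ℂ = ⟪a, a'⟫_ℂ * ⟪b, b'⟫_ℂ * ⟪c, c'⟫_ℂ
  dense_span : Dense (span ℂ {z | ∃ a b c, z = T a b c} : Set F)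

/-- `B = A ⊗ 1`, in terms of matrix coefficients. -/
def IsAmpliation (t : H₁ →ₗ[ℂ] H₂ →ₗ[ℂ] E) (T : H₁ → H₂ → H₃ →ₗ[ℂ] F)
    (A : E →L[ℂ] E) (B : F →L[ℂ] F) : Prop :=
  ∀ a b c a' b' c', ⟪T a' b' c', B (T a b c)⟫_ℂ = ⟪t a' b', A (t a b)⟫_ℂ * ⟪c', c⟫_ℂ

variable {t : H₁ →ₗ[ℂ] H₂ →ₗ[ℂ] E} {T : H₁ → H₂ → H₃ →ₗ[ℂ] F}

theorem IsTensorEmbedding₂.norm_apply_apply (ht : IsTensorEmbedding₂ t) (a : H₁) (b : H₂) :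
    ‖t a b‖ = ‖a‖ * ‖b‖ :=
  norm_eq_of_inner_self_eq (by positivity) (by
    simp only [ht.inner_apply_apply, inner_self_eq_ofReal_norm_sq]; push_cast; ring)

def IsTensorEmbedding₂.toCLM (ht : IsTensorEmbedding₂ t) : H₁ →L[ℂ] H₂ →L[ℂ] E :=
  t.mkContinuous₂ 1 fun a b => by rw [ht.norm_apply_apply, one_mul]

theorem IsTensorEmbedding₂.toCLM_apply_apply (ht : IsTensorEmbedding₂ t) (a : H₁) (b : H₂) :
    ht.toCLM a b = t a b :=
  rfl

theorem IsTensorEmbedding₂.adjoint_toCLM_apply [CompleteSpace H₂] [CompleteSpace E]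
    (ht : IsTensorEmbedding₂ t) (a p : H₁) (q : H₂) :
    (ht.toCLM a).adjoint (t p q) = ⟪a, p⟫_ℂ • q :=
  ext_inner_left ℂ fun x => by
    rw [ContinuousLinearMap.adjoint_inner_right, ht.toCLM_apply_apply, ht.inner_apply_apply,
      inner_smul_right, mul_comm]

theorem IsTensorEmbedding₃.norm_apply_apply_apply (hT : IsTensorEmbedding₃ T)
    (a : H₁) (b : H₂) (c : H₃) : ‖T a b c‖ = ‖a‖ * ‖b‖ * ‖c‖ :=
  norm_eq_of_inner_self_eq (by positivity) (by
    simp only [hT.inner_apply_apply_apply, inner_self_eq_ofReal_norm_sq]; push_cast; ring)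

theorem IsTensorEmbedding₃.exists_tensorRight [CompleteSpace F] (ht : IsTensorEmbedding₂ t)
    (hT : IsTensorEmbedding₃ T) :
    ∃ J : E →L[ℂ] H₃ →L[ℂ] F, ∀ a b c, J (t a b) c = T a b c := by
  let r : H₁ × H₂ → H₃ →L[ℂ] F := fun p =>
    (T p.1 p.2).mkContinuous (‖p.1‖ * ‖p.2‖) fun c => (hT.norm_apply_apply_apply _ _ c).le
  let e := Finsupp.linearCombination ℂ fun p : H₁ × H₂ => t p.1 p.2
  let f := Finsupp.linearCombination ℂ r
  have he : DenseRange e := by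
    have hq : Set.range (fun p : H₁ × H₂ => t p.1 p.2) = {z | ∃ a b, z = t a b} := by
      ext z; simp [eq_comm]
    rw [DenseRange, ← LinearMap.coe_range, Finsupp.range_linearCombination, hq]
    exact ht.dense_span
  have hbound : ∀ g, ‖f g‖ ≤ 1 * ‖e g‖ := fun g => by
    refine (f g).opNorm_le_bound (by positivity) fun c => ?_
    have hfc : f g c = Finsupp.linearCombination ℂ (fun p : H₁ × H₂ => T p.1 p.2 c) g :=
      Finsupp.apply_linearCombination ℂ (ContinuousLinearMap.apply ℂ F c).toLinearMap r g
    rw [hfc, one_mul, mul_comm]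
    refine (norm_eq_of_inner_self_eq (by positivity) ?_).le
    rw [inner_linearCombination_self (q := fun p : H₁ × H₂ => t p.1 p.2) (k := ⟪c, c⟫_ℂ),
      inner_self_eq_ofReal_norm_sq, inner_self_eq_ofReal_norm_sq]
    · push_cast; ring
    · intro i j
      rw [hT.inner_apply_apply_apply, ht.inner_apply_apply]; ring
  refine ⟨f.extendOfNorm e, fun a b c => ?_⟩
  have := LinearMap.extendOfNorm_eq he ⟨1, hbound⟩ (Finsupp.single (a, b) 1)
  simp only [e, f, Finsupp.linearCombination_single, one_smul] at this
  rw [this]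
  rfl

section Ampliation

variable {J : E →L[ℂ] H₃ →L[ℂ] F}

theorem inner_apply_tensorRight (ht : IsTensorEmbedding₂ t) (hT : IsTensorEmbedding₃ T)
    (hJ : ∀ a b c, J (t a b) c = T a b c) (a : H₁) (b : H₂) (c : H₃) (x : E) (c' : H₃) :
    ⟪T a b c, J x c'⟫_ℂ = ⟪t a b, x⟫_ℂ * ⟪c, c'⟫_ℂ := by
  have : (innerSL ℂ (T a b c)).comp (J.flip c') = ⟪c, c'⟫_ℂ • innerSL ℂ (t a b) := by
    refine ContinuousLinearMap.ext_on ht.dense_span ?_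
    rintro _ ⟨p, q, rfl⟩
    simp only [ContinuousLinearMap.comp_apply, ContinuousLinearMap.flip_apply, hJ,
      innerSL_apply_apply, smul_apply, smul_eq_mul,
      hT.inner_apply_apply_apply, ht.inner_apply_apply]
    ring
  simpa [mul_comm] using congr($this x)

theorem adjoint_flip_apply_tensorRight [CompleteSpace E] [CompleteSpace F]
    (ht : IsTensorEmbedding₂ t) (hT : IsTensorEmbedding₃ T) (hJ : ∀ a b c, J (t a b) c = T a b c)
    (a : H₁) (b : H₂) (c c' : H₃) :
    (J.flip c).adjoint (T a b c') = ⟪c, c'⟫_ℂ • t a b := by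
  refine ext_inner_left ℂ fun x => ?_
  rw [ContinuousLinearMap.adjoint_inner_right, ContinuousLinearMap.flip_apply,
    ← inner_conj_symm, inner_apply_tensorRight ht hT hJ, inner_smul_right, map_mul,
    inner_conj_symm, inner_conj_symm, mul_comm]

theorem IsAmpliation.adjoint [CompleteSpace E] [CompleteSpace F] {A : E →L[ℂ] E} {B : F →L[ℂ] F}
    (h : IsAmpliation t T A B) : IsAmpliation t T A.adjoint B.adjoint := by
  intro a b c a' b' c'
  rw [ContinuousLinearMap.adjoint_inner_right, ContinuousLinearMap.adjoint_inner_right,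
    ← inner_conj_symm, h, map_mul, inner_conj_symm, inner_conj_symm]

theorem IsAmpliation.apply_tensorRight {A : E →L[ℂ] E} {B : F →L[ℂ] F}
    (h : IsAmpliation t T A B) (ht : IsTensorEmbedding₂ t) (hT : IsTensorEmbedding₃ T)
    (hJ : ∀ a b c, J (t a b) c = T a b c) (x : E) (c : H₃) : B (J x c) = J (A x) c := by
  have : B.comp (J.flip c) = (J.flip c).comp A := by
    refine ContinuousLinearMap.ext_on ht.dense_span ?_
    rintro _ ⟨a, b, rfl⟩
    simp only [ContinuousLinearMap.comp_apply, ContinuousLinearMap.flip_apply, hJ]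
    refine eq_of_forall_inner_eq_of_dense_span hT.dense_span ?_
    rintro _ ⟨a', b', c', rfl⟩
    rw [h, inner_apply_tensorRight ht hT hJ]
  exact congr($this x)

end Ampliation

end TensorEmbedding

section Slice

variable {H₁ H₂ E : Type*}
  [NormedAddCommGroup H₁] [InnerProductSpace ℂ H₁]
  [NormedAddCommGroup H₂] [InnerProductSpace ℂ H₂] [CompleteSpace H₂]
  [NormedAddCommGroup E] [InnerProductSpace ℂ E] [CompleteSpace E]
  {t : H₁ →ₗ[ℂ] H₂ →ₗ[ℂ] E}

/-- The slice `(id ⊗ ω_{ξ,η})(Σ V)`. -/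
def slice (ht : IsTensorEmbedding₂ t) (V : E →L[ℂ] E) (ξ : H₁) (η : H₂) : H₁ →L[ℂ] H₂ :=
  (ht.toCLM ξ).adjoint ∘L V ∘L ht.toCLM.flip η

theorem inner_slice_apply (ht : IsTensorEmbedding₂ t) (V : E →L[ℂ] E) (ξ : H₁) (η : H₂)
    (ζ : H₁) (ζ' : H₂) : ⟪ζ', slice ht V ξ η ζ⟫_ℂ = ⟪t ξ ζ', V (t ζ η)⟫_ℂ := by
  rw [slice, ContinuousLinearMap.comp_apply, ContinuousLinearMap.comp_apply,
    ContinuousLinearMap.adjoint_inner_right]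
  rfl

theorem eq_slice_of_forall_inner (ht : IsTensorEmbedding₂ t) {V : E →L[ℂ] E} {ξ : H₁} {η : H₂}
    {S : H₁ →L[ℂ] H₂} (h : ∀ ζ ζ', ⟪ζ', S ζ⟫_ℂ = ⟪t ξ ζ', V (t ζ η)⟫_ℂ) : S = slice ht V ξ η :=
  ContinuousLinearMap.ext fun ζ => ext_inner_left ℂ fun ζ' => by rw [h, inner_slice_apply]

end Slice

section Slice₁₃

variable {H E F : Type*}
  [NormedAddCommGroup H] [InnerProductSpace ℂ H] [CompleteSpace H]
  [NormedAddCommGroup E] [InnerProductSpace ℂ E]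
  [NormedAddCommGroup F] [InnerProductSpace ℂ F] [CompleteSpace F]

/-- With `J x c = x ⊗ c` and `K x a = a ⊗ x`, this is the operator
`⟪ζ', slice₁₃ J K W u w ζ⟫ = ⟪u ⊗ ζ', W (ζ ⊗ w)⟫`. -/
def slice₁₃ (J K : E →L[ℂ] H →L[ℂ] F) (W : F →L[ℂ] F) (u w : E) : H →L[ℂ] H :=
  (J u).adjoint ∘L W ∘L K w

theorem inner_slice₁₃_apply (J K : E →L[ℂ] H →L[ℂ] F) (W : F →L[ℂ] F) (u w : E) (ζ ζ' : H) :
    ⟪ζ', slice₁₃ J K W u w ζ⟫_ℂ = ⟪J u ζ', W (K w ζ)⟫_ℂ := by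
  rw [slice₁₃, ContinuousLinearMap.comp_apply, ContinuousLinearMap.comp_apply,
    ContinuousLinearMap.adjoint_inner_right]

theorem slice₁₃_mem_of_dense_span (J K : E →L[ℂ] H →L[ℂ] F) (W : F →L[ℂ] F) {s : Set E}
    (hs : Dense (span ℂ s : Set E)) {M : Submodule ℂ (H →L[ℂ] H)}
    (hM : IsClosed (M : Set (H →L[ℂ] H))) (h : ∀ u ∈ s, ∀ w ∈ s, slice₁₃ J K W u w ∈ M)
    (u w : E) : slice₁₃ J K W u w ∈ M := by
  have hleft : ∀ u ∈ s, slice₁₃ J K W u w ∈ M := fun u hu =>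
    map_mem_of_mem_closure_span
      ((ContinuousLinearMap.compL ℂ H F H ((J u).adjoint ∘L W)).comp K) hM (h u hu) (hs w)
  -- `u ↦ slice₁₃ J K W u w` is conjugate-linear
  let adjointL : (H →L[ℂ] F) →L⋆[ℂ] F →L[ℂ] H :=
    ContinuousLinearMap.adjoint.toContinuousLinearEquiv.toContinuousLinearMap
  exact map_mem_of_mem_closure_span
    (((ContinuousLinearMap.compL ℂ H F H).flip (W ∘L K w)).comp (adjointL.comp J))
    hM hleft (hs u)

end Slice₁₃

section Pentagon

variable {H E F : Type*}
  [NormedAddCommGroup H] [InnerProductSpace ℂ H] [CompleteSpace H]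
  [NormedAddCommGroup E] [InnerProductSpace ℂ E] [CompleteSpace E]
  [NormedAddCommGroup F] [InnerProductSpace ℂ F] [CompleteSpace F]
  {t : H →ₗ[ℂ] H →ₗ[ℂ] E} {t3 : H →ₗ[ℂ] H →ₗ[ℂ] H →ₗ[ℂ] F} {J K : E →L[ℂ] H →L[ℂ] F}
  {V : E →L[ℂ] E}

theorem slice₁₃_apply_apply (ht : IsTensorEmbedding₂ t) (V13 : F →L[ℂ] F)
    (hJ : ∀ a b c, J (t a b) c = t3 a b c) (hK : ∀ a b c, K (t a b) c = t3 c a b)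
    (hV13 : ∀ a b c a' b' c', (inner ℂ (t3 a' b' c') (V13 (t3 a b c)) : ℂ)
      = (inner ℂ (t a' c') (V (t a c)) : ℂ) * inner ℂ b' b) (a b p q : H) :
    slice₁₃ J K V13 (t a b) (t p q) = ⟪b, p⟫_ℂ • slice ht V a q := by
  refine ContinuousLinearMap.ext fun ζ => ext_inner_left ℂ fun ζ' => ?_
  rw [inner_slice₁₃_apply, hJ, hK, hV13, smul_apply, inner_smul_right,
    inner_slice_apply, mul_comm]

theorem slice_mul_slice (ht : IsTensorEmbedding₂ t) (hT : IsTensorEmbedding₃ fun a b => t3 a b)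
    (hT' : IsTensorEmbedding₃ fun a b => (t3.flip a).flip b)
    (hJ : ∀ a b c, J (t a b) c = t3 a b c) (hK : ∀ a b c, K (t a b) c = t3 c a b)
    {V12 V13 V23 : F →L[ℂ] F} (h12 : IsAmpliation t (fun a b => t3 a b) V V12)
    (h23 : IsAmpliation t (fun a b => (t3.flip a).flip b) V V23)
    (hpent : V12.comp (V13.comp V23) = V23.comp V12) (ξ η ξ' η' : H) :
    slice ht V ξ η * slice ht V ξ' η' = slice₁₃ J K V13 (V.adjoint (t ξ' ξ)) (V (t η' η)) := by
  have hmid : ht.toCLM.flip η ∘L (ht.toCLM ξ').adjoint = (K.flip ξ').adjoint ∘L J.flip η := by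
    refine ContinuousLinearMap.ext_on ht.dense_span ?_
    rintro _ ⟨p, q, rfl⟩
    have := adjoint_flip_apply_tensorRight ht hT' hK q η ξ' p
    simp only [LinearMap.flip_apply] at this
    simp only [ContinuousLinearMap.comp_apply, ContinuousLinearMap.flip_apply, hJ, this,
      ht.adjoint_toCLM_apply, map_smul, ht.toCLM_apply_apply]
  refine ContinuousLinearMap.ext fun ζ => ext_inner_left ℂ fun ζ' => ?_
  calc ⟪ζ', (slice ht V ξ η * slice ht V ξ' η') ζ⟫_ℂ
      = ⟪V.adjoint (t ξ ζ'), (ht.toCLM.flip η ∘L (ht.toCLM ξ').adjoint) (V (t ζ η'))⟫_ℂ := by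
        rw [mul_apply_eq_comp, inner_slice_apply,
          ← ContinuousLinearMap.adjoint_inner_left]
        rfl
    _ = ⟪K (V.adjoint (t ξ ζ')) ξ', J (V (t ζ η')) η⟫_ℂ := by
        rw [hmid, ContinuousLinearMap.comp_apply, ContinuousLinearMap.adjoint_inner_right]
        rfl
    _ = ⟪t3 ξ' ξ ζ', V23 (V12 (t3 ζ η' η))⟫_ℂ := by
        rw [← h23.adjoint.apply_tensorRight ht hT' hK, ← h12.apply_tensorRight ht hT hJ, hK, hJ,
          ContinuousLinearMap.adjoint_inner_left]
    _ = ⟪V12.adjoint (J (t ξ' ξ) ζ'), V13 (V23 (K (t η' η) ζ))⟫_ℂ := by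
        rw [hJ, hK, ContinuousLinearMap.adjoint_inner_left, ← ContinuousLinearMap.comp_apply V23,
          ← hpent]
        rfl
    _ = ⟪ζ', slice₁₃ J K V13 (V.adjoint (t ξ' ξ)) (V (t η' η)) ζ⟫_ℂ := by
        rw [h12.adjoint.apply_tensorRight ht hT hJ, h23.apply_tensorRight ht hT' hK,
          inner_slice₁₃_apply]

end Pentagon

theorem stmt16_general
    {H E F : Type*}
    [NormedAddCommGroup H] [InnerProductSpace ℂ H] [CompleteSpace H]
    [NormedAddCommGroup E] [InnerProductSpace ℂ E] [CompleteSpace E]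
    [NormedAddCommGroup F] [InnerProductSpace ℂ F] [CompleteSpace F]
    (t : H →ₗ[ℂ] H →ₗ[ℂ] E)
    (ht : ∀ a a' b b', (inner ℂ (t a b) (t a' b') : ℂ) = inner ℂ a a' * inner ℂ b b')
    (hd : Dense (Submodule.span ℂ {z : E | ∃ a b, z = t a b} : Set E))
    (t3 : H →ₗ[ℂ] H →ₗ[ℂ] H →ₗ[ℂ] F)
    (ht3 : ∀ a b c a' b' c', (inner ℂ (t3 a b c) (t3 a' b' c') : ℂ)
      = inner ℂ a a' * inner ℂ b b' * inner ℂ c c')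
    (hd3 : Dense (Submodule.span ℂ {z : F | ∃ a b c, z = t3 a b c} : Set F))
    (V : E →L[ℂ] E)
    (V12 V13 V23 : F →L[ℂ] F)
    (hV12 : ∀ a b c a' b' c', (inner ℂ (t3 a' b' c') (V12 (t3 a b c)) : ℂ)
      = (inner ℂ (t a' b') (V (t a b)) : ℂ) * inner ℂ c' c)
    (hV13 : ∀ a b c a' b' c', (inner ℂ (t3 a' b' c') (V13 (t3 a b c)) : ℂ)
      = (inner ℂ (t a' c') (V (t a c)) : ℂ) * inner ℂ b' b)
    (hV23 : ∀ a b c a' b' c', (inner ℂ (t3 a' b' c') (V23 (t3 a b c)) : ℂ)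
      = (inner ℂ a' a : ℂ) * inner ℂ (t b' c') (V (t b c)))
    (hpent : V12.comp (V13.comp V23) = V23.comp V12) :
    ∀ x ∈ closure (Submodule.span ℂ {S : H →L[ℂ] H | ∃ ξ η : H,
        ∀ ζ ζ', (inner ℂ ζ' (S ζ) : ℂ) = inner ℂ (t ξ ζ') (V (t ζ η))} : Set (H →L[ℂ] H)),
      ∀ y ∈ closure (Submodule.span ℂ {S : H →L[ℂ] H | ∃ ξ η : H,
        ∀ ζ ζ', (inner ℂ ζ' (S ζ) : ℂ) = inner ℂ (t ξ ζ') (V (t ζ η))} : Set (H →L[ℂ] H)),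
      x * y ∈ closure (Submodule.span ℂ {S : H →L[ℂ] H | ∃ ξ η : H,
        ∀ ζ ζ', (inner ℂ ζ' (S ζ) : ℂ) = inner ℂ (t ξ ζ') (V (t ζ η))} : Set (H →L[ℂ] H)) := by
  have hE : IsTensorEmbedding₂ t := ⟨ht, hd⟩
  have hF : IsTensorEmbedding₃ fun a b => t3 a b := ⟨ht3, hd3⟩
  have hF' : IsTensorEmbedding₃ fun a b => (t3.flip a).flip b := by
    refine ⟨fun a b c a' b' c' => ?_, ?_⟩
    · simp only [LinearMap.flip_apply, ht3]; ring
    · have hrot : {z | ∃ a b c, z = (t3.flip a).flip b c} = {z : F | ∃ a b c, z = t3 a b c} := by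
        ext z
        simp only [LinearMap.flip_apply, Set.mem_ofPred_eq]
        exact ⟨fun ⟨a, b, c, h⟩ => ⟨c, a, b, h⟩, fun ⟨a, b, c, h⟩ => ⟨b, c, a, h⟩⟩
      exact hrot ▸ hd3
  obtain ⟨J, hJ⟩ := hF.exists_tensorRight hE
  obtain ⟨K, hK⟩ := hF'.exists_tensorRight hE
  have h23 : IsAmpliation t (fun a b => (t3.flip a).flip b) V V23 := fun a b c a' b' c' => by
    simp only [LinearMap.flip_apply]
    rw [hV23, mul_comm]
  intro x hx y hy
  refine mul_mem_closure_span (fun S₁ h₁ S₂ h₂ => ?_) hx hy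
  obtain ⟨ξ, η, h₁⟩ := h₁
  obtain ⟨ξ', η', h₂⟩ := h₂
  rw [eq_slice_of_forall_inner hE h₁, eq_slice_of_forall_inner hE h₂,
    slice_mul_slice hE hF hF' hJ hK hV12 h23 hpent, ← Submodule.topologicalClosure_coe]
  refine slice₁₃_mem_of_dense_span J K V13 hd (Submodule.isClosed_topologicalClosure _) ?_ _ _
  rintro _ ⟨a, b, rfl⟩ _ ⟨p, q, rfl⟩
  rw [slice₁₃_apply_apply hE V13 hJ hK hV13]
  exact Submodule.smul_mem _ _ (Submodule.le_topologicalClosure _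
    (Submodule.subset_span ⟨a, q, inner_slice_apply hE V a q⟩))

/-- If `V` is a unitary on `H ⊗ H` (given abstractly) satisfying the pentagon equation
`V₁₂ V₁₃ V₂₃ = V₂₃ V₁₂`, then the closed span `C(V)` of the slices `(id ⊗ ω_{ξ,η})(Σ V)`
is closed under multiplication. -/
theorem stmt16
    {H E F : Type*}
    [NormedAddCommGroup H] [InnerProductSpace ℂ H] [CompleteSpace H]
    [NormedAddCommGroup E] [InnerProductSpace ℂ E] [CompleteSpace E]
    [NormedAddCommGroup F] [InnerProductSpace ℂ F] [CompleteSpace F]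
    (t : H →ₗ[ℂ] H →ₗ[ℂ] E)
    (ht : ∀ a a' b b', (inner ℂ (t a b) (t a' b') : ℂ) = inner ℂ a a' * inner ℂ b b')
    (hd : Dense (Submodule.span ℂ {z : E | ∃ a b, z = t a b} : Set E))
    (t3 : H →ₗ[ℂ] H →ₗ[ℂ] H →ₗ[ℂ] F)
    (ht3 : ∀ a b c a' b' c', (inner ℂ (t3 a b c) (t3 a' b' c') : ℂ)
      = inner ℂ a a' * inner ℂ b b' * inner ℂ c c')
    (hd3 : Dense (Submodule.span ℂ {z : F | ∃ a b c, z = t3 a b c} : Set F))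
    (V : E →L[ℂ] E) (hV : V ∈ unitary (E →L[ℂ] E))
    (V12 V13 V23 : F →L[ℂ] F)
    (hV12 : ∀ a b c a' b' c', (inner ℂ (t3 a' b' c') (V12 (t3 a b c)) : ℂ)
      = (inner ℂ (t a' b') (V (t a b)) : ℂ) * inner ℂ c' c)
    (hV13 : ∀ a b c a' b' c', (inner ℂ (t3 a' b' c') (V13 (t3 a b c)) : ℂ)
      = (inner ℂ (t a' c') (V (t a c)) : ℂ) * inner ℂ b' b)
    (hV23 : ∀ a b c a' b' c', (inner ℂ (t3 a' b' c') (V23 (t3 a b c)) : ℂ)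
      = (inner ℂ a' a : ℂ) * inner ℂ (t b' c') (V (t b c)))
    (hpent : V12.comp (V13.comp V23) = V23.comp V12) :
    ∀ x ∈ closure (Submodule.span ℂ {S : H →L[ℂ] H | ∃ ξ η : H,
        ∀ ζ ζ', (inner ℂ ζ' (S ζ) : ℂ) = inner ℂ (t ξ ζ') (V (t ζ η))} : Set (H →L[ℂ] H)),
      ∀ y ∈ closure (Submodule.span ℂ {S : H →L[ℂ] H | ∃ ξ η : H,
        ∀ ζ ζ', (inner ℂ ζ' (S ζ) : ℂ) = inner ℂ (t ξ ζ') (V (t ζ η))} : Set (H →L[ℂ] H)),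
      x * y ∈ closure (Submodule.span ℂ {S : H →L[ℂ] H | ∃ ξ η : H,
        ∀ ζ ζ', (inner ℂ ζ' (S ζ) : ℂ) = inner ℂ (t ξ ζ') (V (t ζ η))} : Set (H →L[ℂ] H)) :=
  stmt16_general t ht hd t3 ht3 hd3 V V12 V13 V23 hV12 hV13 hV23 hpent
end
end
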